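/- On X = ℂ* = ℂ \ {0} with ω = z^k dz for an integer k ≠ −1, one has ρ(a, z^k dz, ℂ*) = |a^{k+1}/(k+1)| for every a ∈ ℂ*; in particular ρ(a, z^k dz, ℂ*) → 0 as a → 0 when k ≥ 0, and ρ(a, z^k dz, ℂ*) → 0 as a → ∞ when k ≤ −2. Moreover, ψ(a) = max{−log ρ(a, dz, ℂ*), −log ρ(a, z^{−2} dz, ℂ*)} is a continuous subharmonic function on ℂ* tending to +∞ both as a → 0 and as a → ∞. -/

import Mathlib

/-! With `n = k + 1`, the local inverse of `ζ(x) = (xⁿ − aⁿ)/n` is the branch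
`a (1 + nζ/aⁿ)^{1/n}` of the `n`-th root, holomorphic and nonvanishing on `|ζ| < |aⁿ/n|`;
conversely `ζ` omits the value `−aⁿ/n` on `ℂ*`, so no admissible disc is larger.
Hence `ρ(a, dz) = |a|` and `ρ(a, z⁻² dz) = |a|⁻¹`, so that `ψ = |log |a||` is the absolute value
of a harmonic function, which is subharmonic by the mean value property. -/

open scoped ENNReal Topology
open Set Metric

noncomputable section

/-- The scalar `ρ(a, ω, Ω)` for a holomorphic 1-form `ω = dG` on a domain of `ℂ`
with primitive `G`: the supremum of radii `r > 0` such that the local inverse of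
the Abelian integral `ζ(x) = ∫ₐˣ ω = G(x) − G(a)` extends holomorphically to the
disk `{|ζ| < r}` with values in `Ω`. -/
def rhoC (G : ℂ → ℂ) (a : ℂ) (Ω : Set ℂ) : ℝ≥0∞ :=
  ⨆ r ∈ {r : ℝ | 0 < r ∧ ∃ φ : ℂ → ℂ, DifferentiableOn ℂ φ (Metric.ball (0 : ℂ) r) ∧
    φ 0 = a ∧ Set.MapsTo φ (Metric.ball (0 : ℂ) r) Ω ∧
    ∀ w ∈ Metric.ball (0 : ℂ) r, G (φ w) - G a = w}, ENNReal.ofReal r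

/-- `u` is subharmonic on `s ⊆ ℂ`: upper semicontinuous and satisfying the
sub-mean-value inequality on circles. -/
def SubharmonicOn (u : ℂ → ℝ) (s : Set ℂ) : Prop :=
  UpperSemicontinuousOn u s ∧
  ∀ c : ℂ, ∀ r : ℝ, 0 < r → Metric.closedBall c r ⊆ s →
    u c ≤ (1 / (2 * Real.pi)) * ∫ θ in (0 : ℝ)..(2 * Real.pi),
      u (c + (r : ℂ) * Complex.exp ((θ : ℂ) * Complex.I))

open Filter

section RhoC

variable {G : ℂ → ℂ} {a : ℂ} {Ω : Set ℂ}

theorem ofReal_le_rhoC {r : ℝ} {φ : ℂ → ℂ} (hr : 0 < r) (hφ : DifferentiableOn ℂ φ (ball 0 r))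
    (hφ0 : φ 0 = a) (hφΩ : MapsTo φ (ball 0 r) Ω) (hGφ : ∀ w ∈ ball (0 : ℂ) r, G (φ w) - G a = w) :
    ENNReal.ofReal r ≤ rhoC G a Ω :=
  le_iSup₂ (f := fun (r : ℝ) (_ : r ∈ _) => ENNReal.ofReal r) r ⟨hr, φ, hφ, hφ0, hφΩ, hGφ⟩

theorem rhoC_le_of_forall_ne {w₀ : ℂ} (hw₀ : ∀ z ∈ Ω, G z - G a ≠ w₀) :
    rhoC G a Ω ≤ ENNReal.ofReal ‖w₀‖ := by
  refine iSup₂_le fun r ⟨_, φ, _, _, hφΩ, hGφ⟩ =>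
    ENNReal.ofReal_le_ofReal (not_lt.mp fun hlt => ?_)
  have hw₀r : w₀ ∈ ball (0 : ℂ) r := mem_ball_zero_iff.mpr hlt
  exact hw₀ (φ w₀) (hφΩ hw₀r) (hGφ w₀ hw₀r)

end RhoC

theorem Complex.exp_log_div_zpow {n : ℤ} (hn : n ≠ 0) {u : ℂ} (hu : u ≠ 0) :
    Complex.exp (Complex.log u / n) ^ n = u := by
  rw [← Complex.exp_int_mul, mul_div_cancel₀ _ (Int.cast_ne_zero.mpr hn), Complex.exp_log hu]

theorem rhoC_zpow_div {n : ℤ} (hn : n ≠ 0) {a : ℂ} (ha : a ≠ 0) :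
    rhoC (fun z => z ^ n / (n : ℂ)) a {0}ᶜ = ENNReal.ofReal ‖a ^ n / (n : ℂ)‖ := by
  set b := a ^ n / (n : ℂ) with hb_def
  have hnC : (n : ℂ) ≠ 0 := Int.cast_ne_zero.mpr hn
  have hb : b ≠ 0 := div_ne_zero (zpow_ne_zero n ha) hnC
  refine le_antisymm ?_ ?_
  · rw [← norm_neg b]
    refine rhoC_le_of_forall_ne fun z hz => ?_
    simpa [b] using div_ne_zero (zpow_ne_zero n hz) hnC
  · have hslit : ∀ w ∈ ball (0 : ℂ) ‖b‖, 1 + w / b ∈ Complex.slitPlane := fun w hw =>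
      Complex.mem_slitPlane_of_norm_lt_one <| by
        rw [norm_div, div_lt_one (norm_pos_iff.mpr hb)]; exact mem_ball_zero_iff.mp hw
    refine ofReal_le_rhoC (φ := fun w => a * Complex.exp (Complex.log (1 + w / b) / n))
      (norm_pos_iff.mpr hb) (fun w hw => ?_) (by simp) (fun w _ => ?_) (fun w hw => ?_)
    · have hlog := (Complex.differentiableAt_log (hslit w hw)).comp w
        (by fun_prop : DifferentiableAt ℂ (fun w => 1 + w / b) w)
      exact ((hlog.div_const _).cexp.const_mul a).differentiableWithinAt
    · exact mul_ne_zero ha (Complex.exp_ne_zero _)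
    · have h1 : 1 + w / b ≠ 0 := Complex.slitPlane_ne_zero (hslit w hw)
      simp only [mul_zpow, Complex.exp_log_div_zpow hn h1]
      rw [hb_def]
      field_simp
      ring

section Subharmonic

variable {u v : ℂ → ℝ} {s : Set ℂ}

theorem SubharmonicOn.congr (hu : SubharmonicOn u s) (huv : EqOn v u s) : SubharmonicOn v s := by
  refine ⟨fun x hx => UpperSemicontinuousWithinAt.congr_of_eventuallyEq (hu.1 x hx) hx ?_,
    fun c r hr hcs => ?_⟩
  · filter_upwards [self_mem_nhdsWithin] with y hy using (huv hy).symm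
  have hcircle : ∀ θ : ℝ, c + (r : ℂ) * Complex.exp ((θ : ℂ) * Complex.I) ∈ s := fun θ =>
    hcs (sphere_subset_closedBall (by simp [hr.le]))
  rw [huv (hcs (mem_closedBall_self hr.le)),
    intervalIntegral.integral_congr fun θ _ => huv (hcircle θ)]
  exact hu.2 c r hr hcs

theorem InnerProductSpace.HarmonicOnNhd.subharmonicOn_abs (hu : HarmonicOnNhd u s) :
    SubharmonicOn (fun z => |u z|) s := by
  refine ⟨(continuous_abs.comp_continuousOn hu.continuousOn).upperSemicontinuousOn,
    fun c r hr hcs => ?_⟩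
  calc |u c| = |Real.circleAverage u c r| := by
        rw [(hu.mono (by rwa [abs_of_pos hr])).circleAverage_eq]
    _ ≤ Real.circleAverage (fun z => |u z|) c r := Real.abs_circleAverage_le_circleAverage_abs
    _ = _ := by rw [Real.circleAverage_def, smul_eq_mul, one_div]; rfl

end Subharmonic

theorem harmonicOnNhd_log_norm :
    InnerProductSpace.HarmonicOnNhd (fun z : ℂ => Real.log ‖z‖) {0}ᶜ :=
  fun _ hz => analyticAt_id.harmonicAt_log_norm hz

theorem tendsto_abs_log_norm_nhdsNE_zero :
    Tendsto (fun z : ℂ => |Real.log ‖z‖|) (𝓝[≠] 0) atTop :=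
  tendsto_abs_atBot_atTop.comp (Real.tendsto_log_nhdsGT_zero.comp tendsto_norm_nhdsNE_zero)

theorem tendsto_abs_log_norm_cobounded :
    Tendsto (fun z : ℂ => |Real.log ‖z‖|) (Bornology.cobounded ℂ) atTop :=
  tendsto_abs_atTop_atTop.comp (Real.tendsto_log_atTop.comp tendsto_norm_cobounded_atTop)

theorem tendsto_zpow_nhdsNE_zero {n : ℤ} (hn : 0 < n) :
    Tendsto (fun z : ℂ => z ^ n) (𝓝[≠] 0) (𝓝 0) := by
  simpa [zero_zpow _ hn.ne'] using
    (continuousAt_zpow₀ (0 : ℂ) n (Or.inr hn.le)).tendsto.mono_left nhdsWithin_le_nhds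

theorem tendsto_zpow_cobounded_zero {n : ℤ} (hn : n < 0) :
    Tendsto (fun z : ℂ => z ^ n) (Bornology.cobounded ℂ) (𝓝 0) := by
  refine tendsto_zero_iff_norm_tendsto_zero.mpr ?_
  simpa only [norm_zpow, Function.comp_def] using
    (tendsto_zpow_atTop_zero hn).comp tendsto_norm_cobounded_atTop

theorem tendsto_ofReal_norm_div_const {α : Type*} {l : Filter α} {f : α → ℂ} (c : ℂ)
    (hf : Tendsto f l (𝓝 0)) :
    Tendsto (fun x => ENNReal.ofReal ‖f x / c‖) l (𝓝 0) := by
  simpa using ENNReal.tendsto_ofReal (hf.div_const c).norm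

theorem max_neg_log_rhoC_eq_abs_log_norm {a : ℂ} (ha : a ≠ 0) :
    max (-Real.log (rhoC id a {0}ᶜ).toReal) (-Real.log (rhoC (fun z => -z⁻¹) a {0}ᶜ).toReal) =
      |Real.log ‖a‖| := by
  have hid : rhoC id a {0}ᶜ = ENNReal.ofReal ‖a‖ := by
    have h := rhoC_zpow_div one_ne_zero ha
    simp only [zpow_one, Int.cast_one, div_one] at h
    exact h
  have hinv : rhoC (fun z => -z⁻¹) a {0}ᶜ = ENNReal.ofReal ‖a‖⁻¹ := by
    simpa [div_neg] using rhoC_zpow_div (n := -1) (by norm_num) ha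
  rw [hid, hinv, ENNReal.toReal_ofReal (norm_nonneg a), ENNReal.toReal_ofReal (by positivity),
    Real.log_inv, neg_neg, max_comm, abs_eq_max_neg]

/-- on `X = ℂ* = ℂ \ {0}`, for `ω = z^k dz` with `k ≠ −1` (primitive
`G(z) = z^{k+1}/(k+1)`), `ρ(a, z^k dz, ℂ*) = |a^{k+1}/(k+1)|`; it tends to `0` as
`a → 0` when `k ≥ 0` and as `a → ∞` when `k ≤ −2`.  Moreover
`ψ(a) = max{−log ρ(a, dz, ℂ*), −log ρ(a, z⁻²dz, ℂ*)}` (primitives `id` and `−z⁻¹`)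
is continuous subharmonic on `ℂ*` with `ψ(a) → ∞` as `a → 0` and as `a → ∞`. -/
theorem rho_zk_dz_on_Cstar (k : ℤ) (hk : k ≠ -1) :
    (∀ a : ℂ, a ≠ 0 →
      rhoC (fun z => z ^ (k + 1) / ((k : ℂ) + 1)) a {(0 : ℂ)}ᶜ
        = ENNReal.ofReal ‖a ^ (k + 1) / ((k : ℂ) + 1)‖) ∧
    (0 ≤ k → Filter.Tendsto (fun a : ℂ => rhoC (fun z => z ^ (k + 1) / ((k : ℂ) + 1)) a {(0 : ℂ)}ᶜ)
      (𝓝[{(0 : ℂ)}ᶜ] 0) (𝓝 0)) ∧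
    (k ≤ -2 → Filter.Tendsto (fun a : ℂ => rhoC (fun z => z ^ (k + 1) / ((k : ℂ) + 1)) a {(0 : ℂ)}ᶜ)
      (Bornology.cobounded ℂ) (𝓝 0)) ∧
    (ContinuousOn
        (fun a : ℂ => max (-Real.log ((rhoC id a {(0 : ℂ)}ᶜ).toReal))
          (-Real.log ((rhoC (fun z => -z⁻¹) a {(0 : ℂ)}ᶜ).toReal))) {(0 : ℂ)}ᶜ ∧
      SubharmonicOn
        (fun a : ℂ => max (-Real.log ((rhoC id a {(0 : ℂ)}ᶜ).toReal))
          (-Real.log ((rhoC (fun z => -z⁻¹) a {(0 : ℂ)}ᶜ).toReal))) {(0 : ℂ)}ᶜ ∧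
      Filter.Tendsto
        (fun a : ℂ => max (-Real.log ((rhoC id a {(0 : ℂ)}ᶜ).toReal))
          (-Real.log ((rhoC (fun z => -z⁻¹) a {(0 : ℂ)}ᶜ).toReal)))
        (𝓝[{(0 : ℂ)}ᶜ] 0) Filter.atTop ∧
      Filter.Tendsto
        (fun a : ℂ => max (-Real.log ((rhoC id a {(0 : ℂ)}ᶜ).toReal))
          (-Real.log ((rhoC (fun z => -z⁻¹) a {(0 : ℂ)}ᶜ).toReal)))
        (Bornology.cobounded ℂ) Filter.atTop) := by
  have hn : k + 1 ≠ 0 := by omega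
  have hρ (a : ℂ) (ha : a ≠ 0) : rhoC (fun z => z ^ (k + 1) / ((k : ℂ) + 1)) a {(0 : ℂ)}ᶜ =
      ENNReal.ofReal ‖a ^ (k + 1) / ((k : ℂ) + 1)‖ := by
    exact_mod_cast rhoC_zpow_div hn ha
  refine ⟨hρ, fun hk0 => ?_, fun hk2 => ?_, ?_⟩
  · exact (tendsto_ofReal_norm_div_const _ (tendsto_zpow_nhdsNE_zero (by omega))).congr'
      (eventually_nhdsWithin_of_forall fun a ha => (hρ a ha).symm)
  · exact (tendsto_ofReal_norm_div_const _ (tendsto_zpow_cobounded_zero (by omega))).congr'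
      ((Bornology.eventually_ne_cobounded 0).mono fun a ha => (hρ a ha).symm)
  · have hψ : EqOn (fun a : ℂ => |Real.log ‖a‖|)
        (fun a => max (-Real.log (rhoC id a {0}ᶜ).toReal)
          (-Real.log (rhoC (fun z => -z⁻¹) a {0}ᶜ).toReal)) {0}ᶜ :=
      fun a ha => (max_neg_log_rhoC_eq_abs_log_norm ha).symm
    exact ⟨(continuous_abs.comp_continuousOn harmonicOnNhd_log_norm.continuousOn).congr hψ.symm,
      harmonicOnNhd_log_norm.subharmonicOn_abs.congr hψ.symm,
      tendsto_abs_log_norm_nhdsNE_zero.congr' (eventually_nhdsWithin_of_forall hψ),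
      tendsto_abs_log_norm_cobounded.congr' ((Bornology.eventually_ne_cobounded 0).mono hψ)⟩

end
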